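/- arXiv:2103.12444 — 4 statements merged into one kernel-verified Lean document; each statement's English description precedes it below -/
import Mathlib

section
/- Fix a relaxation order d ≥ d_min for the CPOP. The sequence (ρ^ts_{d,k})_{k≥1} of optima of the term-sparsity-adapted complex moment relaxations is monotone nondecreasing in the sparse order k, and ρ^ts_{d,k} ≤ ρ_d for all k ≥ 1, where ρ_d is the optimum of the dense complex moment relaxation (Q_d). -/
open scoped BigOperators ComplexOrder

attribute [local instance] Classical.propDecidable

noncomputable section

/-- Exponent tuples `ℕ^n`. -/
abbrev Exp (n : ℕ) := Fin n → ℕ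

/-- A complex polynomial in `z, z̄` that is real-valued (Hermitian), represented by its
coefficients `f_{β,γ}` (of the monomial `z^β z̄^γ`). -/
structure CPoly (n : ℕ) where
  coeff : Exp n × Exp n → ℂ
  finite_support : (Function.support coeff).Finite
  herm : ∀ p : Exp n × Exp n, coeff (p.2, p.1) = star (coeff p)

namespace CPoly

variable {n : ℕ}

/-- The support of a polynomial. -/
def supp (f : CPoly n) : Set (Exp n × Exp n) := Function.support f.coeff

/-- The (total) degree of a polynomial. -/
def deg (f : CPoly n) : ℕ :=
  sSup ((fun p : Exp n × Exp n => (∑ i, p.1 i) + ∑ i, p.2 i) '' f.supp)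

/-- `⌈deg f / 2⌉`. -/
def halfDeg (f : CPoly n) : ℕ := (f.deg + 1) / 2

/-- The constant polynomial `1`. -/
def one (n : ℕ) : CPoly n where
  coeff := fun p => if p = (0, 0) then 1 else 0
  finite_support := by
    apply Set.Finite.subset (Set.finite_singleton ((0, 0) : Exp n × Exp n))
    intro p hp
    by_contra hne
    simp only [Function.mem_support] at hp
    rw [if_neg (by simpa using hne)] at hp
    exact hp rfl
  herm := by
    rintro ⟨a, b⟩
    have hiff : (((b, a) : Exp n × Exp n) = (0, 0)) ↔ (((a, b) : Exp n × Exp n) = (0, 0)) := by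
      constructor <;> · intro h; rw [Prod.ext_iff] at h ⊢; exact ⟨h.2, h.1⟩
    show (if ((b, a) : Exp n × Exp n) = (0, 0) then (1 : ℂ) else 0)
      = star (if ((a, b) : Exp n × Exp n) = (0, 0) then (1 : ℂ) else 0)
    by_cases h : ((a, b) : Exp n × Exp n) = (0, 0)
    · rw [if_pos (hiff.mpr h), if_pos h]; simp
    · rw [if_neg (fun hc => h (hiff.mp hc)), if_neg h]; simp

end CPoly

/-- Hermitian (pseudo-)moment sequences: `y_{β,γ} = conj (y_{γ,β})`. -/
def IsHermSeq {n : ℕ} (y : Exp n × Exp n → ℂ) : Prop :=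
  ∀ p : Exp n × Exp n, y (p.2, p.1) = star (y p)

/-- The Riesz linear functional `L^c_y(f) = Σ f_{β,γ} y_{β,γ}`. -/
def Lc {n : ℕ} (f : CPoly n) (y : Exp n × Exp n → ℂ) : ℂ :=
  ∑ᶠ p : Exp n × Exp n, f.coeff p * y p

/-- The set `ℕ^n_d` of exponents of degree at most `d`. -/
def degSet (n d : ℕ) : Set (Exp n) := {β | ∑ i, β i ≤ d}

/-- Exponents of degree at most `d` supported on a subset `S` of variables. -/
def degSetI {n : ℕ} (d : ℕ) (S : Set (Fin n)) : Set (Exp n) :=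
  {β | (∑ i, β i ≤ d) ∧ ∀ i, β i ≠ 0 → i ∈ S}

lemma degSetI_finite {n : ℕ} (d : ℕ) (S : Set (Fin n)) : (degSetI d S).Finite := by
  apply Set.Finite.subset (Set.Finite.pi (t := fun _ : Fin n => Set.Iic d)
    (fun _ => Set.finite_Iic d))
  intro β hβ
  simp only [Set.mem_pi, Set.mem_univ, Set.mem_Iic, forall_true_left]
  intro i
  calc β i ≤ ∑ j, β j := Finset.single_le_sum (fun j _ => Nat.zero_le _) (Finset.mem_univ i)
    _ ≤ d := hβ.1

/-- The (finite) index type of a moment/localizing matrix: monomials `β ∈ ℕ^n_d`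
supported on the variable set `S`. -/
def MIdx (n d : ℕ) (S : Set (Fin n)) : Type := ↥(degSetI (n := n) d S)

noncomputable instance {n d : ℕ} {S : Set (Fin n)} : Fintype (MIdx n d S) :=
  (degSetI_finite d S).fintype

instance {n d : ℕ} {S : Set (Fin n)} : DecidableEq (MIdx n d S) :=
  fun a b => Classical.propDecidable _

/-- The complex moment (sub)matrix `M^c_d(y, S)`. -/
def momMat {n : ℕ} (d : ℕ) (S : Set (Fin n)) (y : Exp n × Exp n → ℂ) :
    Matrix (MIdx n d S) (MIdx n d S) ℂ :=
  fun β γ => y (β.1, γ.1)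

/-- The complex localizing (sub)matrix `M^c_d(g y, S)`. -/
def locMat {n : ℕ} (g : CPoly n) (d : ℕ) (S : Set (Fin n)) (y : Exp n × Exp n → ℂ) :
    Matrix (MIdx n d S) (MIdx n d S) ℂ :=
  fun β γ => ∑ᶠ p : Exp n × Exp n, g.coeff p * y (β.1 + p.1, γ.1 + p.2)

/-- The minimum relaxation order `d_min = max{⌈deg f/2⌉, d_1, …, d_m}`. -/
def dminOrd {n m : ℕ} (f : CPoly n) (g : Fin m → CPoly n) : ℕ :=
  max f.halfDeg (Finset.univ.sup fun j => (g j).halfDeg)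

/-- Feasible set of the dense complex moment relaxation `(Q_d)`. -/
def denseFeas {n m : ℕ} (f : CPoly n) (g : Fin m → CPoly n) (d : ℕ) :
    Set (Exp n × Exp n → ℂ) :=
  {y | IsHermSeq y ∧ y (0, 0) = 1 ∧ (momMat d Set.univ y).PosSemidef ∧
    ∀ j : Fin m, (locMat (g j) (d - (g j).halfDeg) Set.univ y).PosSemidef}

/-- `ρ_d`, the optimum of the dense relaxation `(Q_d)` (as an extended real). -/
def denseOpt {n m : ℕ} (f : CPoly n) (g : Fin m → CPoly n) (d : ℕ) : EReal :=
  sInf ((fun y => ((Lc f y).re : EReal)) '' denseFeas f g d)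

/- ### Graphs, chordality, sparsity machinery -/

/-- A graph is chordal if every cycle of length at least four has a chord, i.e. an edge of the
graph joining two vertices of the cycle which is not an edge of the cycle. -/
def IsChordal {V : Type*} (G : SimpleGraph V) : Prop :=
  ∀ ⦃v : V⦄ (w : G.Walk v v), w.IsCycle → 4 ≤ w.length →
    ∃ a b, a ∈ w.support ∧ b ∈ w.support ∧ G.Adj a b ∧ s(a, b) ∉ w.edges

/-- The maximal chordal extension: complete every connected component. -/
def maxChordalExt {V : Type*} (G : SimpleGraph V) : SimpleGraph V :=
  SimpleGraph.fromRel fun a b => G.Reachable a b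

/-- The adjacency matrix `B_G` (restricted to the monomial index set `MIdx n d S`),
with ones on the diagonal. -/
def adjB {n : ℕ} (d : ℕ) (S : Set (Fin n)) (G : SimpleGraph (Exp n)) :
    Matrix (MIdx n d S) (MIdx n d S) ℂ :=
  fun β γ => if β = γ ∨ G.Adj β.1 γ.1 then 1 else 0

/-- Membership in `Π_G(H_+)`: the matrix `M` coincides, on the diagonal and on the edges of
`G`, with some Hermitian positive semidefinite matrix (i.e. `M = Π_G(Q)` for PSD `Q`,
assuming `M` vanishes outside the pattern). -/
def inProjPSD {n : ℕ} (d : ℕ) (S : Set (Fin n)) (G : SimpleGraph (Exp n))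
    (M : Matrix (MIdx n d S) (MIdx n d S) ℂ) : Prop :=
  ∃ Q : Matrix (MIdx n d S) (MIdx n d S) ℂ, Q.PosSemidef ∧
    (fun β γ : MIdx n d S => if β = γ ∨ G.Adj β.1 γ.1 then Q β γ else 0) = M

/-- The `g`-support of a graph `G` with node set `V`:
`supp_g(G) = {(β+β', γ+γ') : β = γ ∈ V or {β,γ} ∈ E(G), (β',γ') ∈ supp(g)}`. -/
def gSupp {n : ℕ} (g : CPoly n) (V : Set (Exp n)) (G : SimpleGraph (Exp n)) :
    Set (Exp n × Exp n) :=
  {q | ∃ β γ p, ((β = γ ∧ β ∈ V) ∨ G.Adj β γ) ∧ p ∈ g.supp ∧ q = (β + p.1, γ + p.2)}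

/-- The global support set `𝒜 = supp(f) ∪ ⋃_j supp(g_j)`. -/
def suppA {n m : ℕ} (f : CPoly n) (g : Fin m → CPoly n) : Set (Exp n × Exp n) :=
  f.supp ∪ ⋃ j : Fin m, (g j).supp

/-- The term sparsity pattern graph on the node set `V` with edges `{β,γ}` for `(β,γ) ∈ A`. -/
def tspGraph {n : ℕ} (A : Set (Exp n × Exp n)) (V : Set (Exp n)) : SimpleGraph (Exp n) :=
  SimpleGraph.fromRel fun β γ => β ∈ V ∧ γ ∈ V ∧ (β, γ) ∈ A

/-- One step of the term sparsity iteration: the graph `F` on node set `V` with edges `{β,γ}`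
such that `((β,γ)+supp(g)) ∩ C ≠ ∅`. -/
def Fstep {n : ℕ} (g : CPoly n) (V : Set (Exp n)) (C : Set (Exp n × Exp n)) :
    SimpleGraph (Exp n) :=
  SimpleGraph.fromRel fun β γ => β ∈ V ∧ γ ∈ V ∧ ∃ p ∈ g.supp, (β + p.1, γ + p.2) ∈ C

/-- `g_0 = 1, g_1, …, g_m`. -/
def gext {n m : ℕ} (g : Fin m → CPoly n) : Fin (m + 1) → CPoly n :=
  Fin.cases (CPoly.one n) g

/-- `d_0 = 0, d_1, …, d_m`. -/
def dje {n m : ℕ} (g : Fin m → CPoly n) : Fin (m + 1) → ℕ :=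
  Fin.cases 0 fun j => (g j).halfDeg

/-- `⋃_{i=0}^m supp_{g_i}(G_i)` for a family of graphs. -/
def tsC {n m : ℕ} (g : Fin m → CPoly n) (d : ℕ)
    (GG : Fin (m + 1) → SimpleGraph (Exp n)) : Set (Exp n × Exp n) :=
  ⋃ i : Fin (m + 1), gSupp (gext g i) (degSet n (d - dje g i)) (GG i)

/-- The family of term sparsity graphs `G^(k)_{d,j}`, built with the chordal extension
operator `CE` (taking the node set and the graph to be extended). -/
def tsFam {n m : ℕ} (f : CPoly n) (g : Fin m → CPoly n)
    (CE : Set (Exp n) → SimpleGraph (Exp n) → SimpleGraph (Exp n)) (d : ℕ) :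
    ℕ → Fin (m + 1) → SimpleGraph (Exp n)
  | 0, j => if j = 0 then tspGraph (suppA f g) (degSet n d) else ⊥
  | k + 1, j =>
      CE (degSet n (d - dje g j))
        (Fstep (gext g j) (degSet n (d - dje g j)) (tsC g d (tsFam f g CE d k)))

/-- Feasible set of the TSSOS relaxation `(Q^ts_{d,k})`. -/
def tsFeas {n m : ℕ} (f : CPoly n) (g : Fin m → CPoly n)
    (CE : Set (Exp n) → SimpleGraph (Exp n) → SimpleGraph (Exp n)) (d k : ℕ) :
    Set (Exp n × Exp n → ℂ) :=
  {y | IsHermSeq y ∧ y (0, 0) = 1 ∧ ∀ j : Fin (m + 1),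
    inProjPSD (d - dje g j) Set.univ (tsFam f g CE d k j)
      (Matrix.hadamard (adjB (d - dje g j) Set.univ (tsFam f g CE d k j))
        (locMat (gext g j) (d - dje g j) Set.univ y))}

/-- `ρ^ts_{d,k}`, the optimum of `(Q^ts_{d,k})`. -/
def tsOpt {n m : ℕ} (f : CPoly n) (g : Fin m → CPoly n)
    (CE : Set (Exp n) → SimpleGraph (Exp n) → SimpleGraph (Exp n)) (d k : ℕ) : EReal :=
  sInf ((fun y => ((Lc f y).re : EReal)) '' tsFeas f g CE d k)

/- ### Sign symmetries -/

/-- The sign symmetries of a set `A ⊆ ℕ^n × ℕ^n`: binary vectors `r ∈ Z_2^n` with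
`rᵀ(β+γ) ≡ 0 (mod 2)` for all `(β,γ) ∈ A`. -/
def signSyms {n : ℕ} (A : Set (Exp n × Exp n)) : Set (Fin n → ZMod 2) :=
  {r | ∀ p ∈ A, ∑ i, r i * ((p.1 i + p.2 i : ℕ) : ZMod 2) = 0}

/- ### Correlative sparsity machinery -/

/-- The variables occurring in a polynomial: `⋃_{(β,γ) ∈ supp g} (supp β ∪ supp γ)`. -/
def varsOf {n : ℕ} (g : CPoly n) : Set (Fin n) :=
  {i | ∃ p ∈ g.supp, p.1 i ≠ 0 ∨ p.2 i ≠ 0}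

/-- The correlative sparsity pattern graph `G^csp` (at relaxation order `d`, with
`J' = {j : d_j = d}`). -/
def cspGraph {n m : ℕ} (f : CPoly n) (g : Fin m → CPoly n) (d : ℕ) : SimpleGraph (Fin n) :=
  SimpleGraph.fromRel fun i i' =>
    (∃ p, (p ∈ f.supp ∨ ∃ j : Fin m, (g j).halfDeg = d ∧ p ∈ (g j).supp) ∧
      (p.1 i ≠ 0 ∨ p.2 i ≠ 0) ∧ (p.1 i' ≠ 0 ∨ p.2 i' ≠ 0)) ∨
    (∃ k : Fin m, (g k).halfDeg ≠ d ∧ i ∈ varsOf (g k) ∧ i' ∈ varsOf (g k))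

/-- `s` is a maximal clique of `G`. -/
def IsMaxClique {V : Type*} (G : SimpleGraph V) (s : Set V) : Prop :=
  G.IsClique s ∧ ∀ t : Set V, G.IsClique t → s ⊆ t → s = t

/-- Feasible set of the correlative sparsity relaxation `(Q^cs_d)` with variable cliques
`I_1, …, I_p`, constraint groups `J_1, …, J_p` and scalarized constraints `J'`. -/
def csFeas {n m p : ℕ} (g : Fin m → CPoly n) (d : ℕ) (I : Fin p → Set (Fin n))
    (J : Fin p → Finset (Fin m)) (J' : Finset (Fin m)) : Set (Exp n × Exp n → ℂ) :=
  {y | IsHermSeq y ∧ y (0, 0) = 1 ∧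
    (∀ l : Fin p, (momMat d (I l) y).PosSemidef) ∧
    (∀ l : Fin p, ∀ j ∈ J l, (locMat (g j) (d - (g j).halfDeg) (I l) y).PosSemidef) ∧
    (∀ j ∈ J', 0 ≤ (Lc (g j) y).re)}

/-- `ρ^cs_d`, the optimum of `(Q^cs_d)`. -/
def csOpt {n m p : ℕ} (f : CPoly n) (g : Fin m → CPoly n) (d : ℕ) (I : Fin p → Set (Fin n))
    (J : Fin p → Finset (Fin m)) (J' : Finset (Fin m)) : EReal :=
  sInf ((fun y => ((Lc f y).re : EReal)) '' csFeas g d I J J')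

/- ### Combined correlative-term sparsity machinery -/

/-- `𝒜_l`: the elements of `A` supported on the variable clique `I_l`. -/
def AlocSet {n : ℕ} (A : Set (Exp n × Exp n)) (I : Set (Fin n)) : Set (Exp n × Exp n) :=
  {q ∈ A | (∀ i, q.1 i ≠ 0 → i ∈ I) ∧ ∀ i, q.2 i ≠ 0 → i ∈ I}

/-- `{0} ∪ J_l` inside `Fin (m+1)`. -/
def Jext {m : ℕ} (Jl : Finset (Fin m)) : Set (Fin (m + 1)) :=
  insert 0 (Fin.succ '' (Jl : Set (Fin m)))

/-- `𝒞^(k)_d = ⋃_l ⋃_{j ∈ {0} ∪ J_l} supp_{g_j}(G^(k)_{d,l,j})`. -/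
def cstsC {n m p : ℕ} (g : Fin m → CPoly n) (d : ℕ) (I : Fin p → Set (Fin n))
    (J : Fin p → Finset (Fin m)) (GG : Fin p → Fin (m + 1) → SimpleGraph (Exp n)) :
    Set (Exp n × Exp n) :=
  ⋃ l : Fin p, ⋃ j ∈ Jext (J l),
    gSupp (gext g j) (degSetI (d - dje g j) (I l)) (GG l j)

/-- The family of correlative-term sparsity graphs `G^(k)_{d,l,j}`, built with the chordal
extension operator `CE`. -/
def cstsFam {n m p : ℕ} (f : CPoly n) (g : Fin m → CPoly n)
    (CE : Set (Exp n) → SimpleGraph (Exp n) → SimpleGraph (Exp n))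
    (I : Fin p → Set (Fin n)) (J : Fin p → Finset (Fin m)) (d : ℕ) :
    ℕ → Fin p → Fin (m + 1) → SimpleGraph (Exp n)
  | 0, l, j => if j = 0 then tspGraph (AlocSet (suppA f g) (I l)) (degSetI d (I l)) else ⊥
  | k + 1, l, j =>
      CE (degSetI (d - dje g j) (I l))
        (Fstep (gext g j) (degSetI (d - dje g j) (I l))
          (cstsC g d I J (cstsFam f g CE I J d k)))

/-- Feasible set of the CS-TSSOS relaxation `(Q^cs-ts_{d,k})`. -/
def cstsFeas {n m p : ℕ} (f : CPoly n) (g : Fin m → CPoly n)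
    (CE : Set (Exp n) → SimpleGraph (Exp n) → SimpleGraph (Exp n))
    (I : Fin p → Set (Fin n)) (J : Fin p → Finset (Fin m)) (J' : Finset (Fin m))
    (d k : ℕ) : Set (Exp n × Exp n → ℂ) :=
  {y | IsHermSeq y ∧ y (0, 0) = 1 ∧
    (∀ l : Fin p, ∀ j ∈ Jext (J l),
      inProjPSD (d - dje g j) (I l) (cstsFam f g CE I J d k l j)
        (Matrix.hadamard (adjB (d - dje g j) (I l) (cstsFam f g CE I J d k l j))
          (locMat (gext g j) (d - dje g j) (I l) y))) ∧
    (∀ j ∈ J', 0 ≤ (Lc (g j) y).re)}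

/-- `ρ^cs-ts_{d,k}`, the optimum of `(Q^cs-ts_{d,k})`. -/
def cstsOpt {n m p : ℕ} (f : CPoly n) (g : Fin m → CPoly n)
    (CE : Set (Exp n) → SimpleGraph (Exp n) → SimpleGraph (Exp n))
    (I : Fin p → Set (Fin n)) (J : Fin p → Finset (Fin m)) (J' : Finset (Fin m))
    (d k : ℕ) : EReal :=
  sInf ((fun y => ((Lc f y).re : EReal)) '' cstsFeas f g CE I J J' d k)

/-! Both inequalities are inclusions of feasible sets. An edge `{β, γ}` of `G^(k)_{d,j}` puts
`(β, γ) + p`, for any `p ∈ supp g_j`, into `supp_{g_j}(G^(k)_{d,j})`, so `{β, γ}` is an edge of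
`F^(k+1)_{d,j} ⊆ G^(k+1)_{d,j}`. A larger graph imposes a stronger PSD-completion constraint, so the
feasible sets shrink as `k` grows; and a feasible point of `(Q_d)` is feasible for every `(Q^ts_{d,k})`,
its dense PSD matrices serving as completions. -/

namespace CPoly

lemma zero_mem_supp_one (n : ℕ) : ((0, 0) : Exp n × Exp n) ∈ (one n).supp := by
  simp [supp, one]

end CPoly

section Matrices

variable {n : ℕ} {e : ℕ} {S : Set (Fin n)}

lemma locMat_one (y : Exp n × Exp n → ℂ) : locMat (CPoly.one n) e S y = momMat e S y := by
  funext β γ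
  rw [locMat, finsum_eq_single _ (0, 0) fun p hp => by simp [CPoly.one, hp]]
  simp [CPoly.one, momMat]

lemma inProjPSD_hadamard_adjB_of_posSemidef (G : SimpleGraph (Exp n))
    {M : Matrix (MIdx n e S) (MIdx n e S) ℂ} (hM : M.PosSemidef) :
    inProjPSD e S G (Matrix.hadamard (adjB e S G) M) :=
  ⟨M, hM, by ext β γ; simp only [Matrix.hadamard_apply, adjB]; split_ifs <;> simp⟩

lemma inProjPSD_hadamard_adjB_mono {G H : SimpleGraph (Exp n)} (hGH : G ≤ H)
    {M : Matrix (MIdx n e S) (MIdx n e S) ℂ}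
    (hH : inProjPSD e S H (Matrix.hadamard (adjB e S H) M)) :
    inProjPSD e S G (Matrix.hadamard (adjB e S G) M) := by
  obtain ⟨Q, hQ, hQM⟩ := hH
  refine ⟨Q, hQ, ?_⟩
  ext β γ
  have hβγ := congrFun (congrFun hQM β) γ
  simp only [Matrix.hadamard_apply, adjB] at hβγ ⊢
  by_cases hG : β = γ ∨ G.Adj β.1 γ.1
  · have hH := hG.imp_right (@hGH _ _)
    rw [if_pos hH, if_pos hH, one_mul] at hβγ
    rw [if_pos hG, if_pos hG, one_mul, hβγ]
  · simp [hG]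

end Matrices

section Graphs

variable {n : ℕ} {g : CPoly n} {V : Set (Exp n)} {C : Set (Exp n × Exp n)}

lemma tspGraph_adj_mem {A : Set (Exp n × Exp n)} {a b : Exp n} (h : (tspGraph A V).Adj a b) :
    a ∈ V ∧ b ∈ V := by
  rcases (SimpleGraph.fromRel_adj _ a b).mp h |>.2 with h | h
  exacts [⟨h.1, h.2.1⟩, ⟨h.2.1, h.1⟩]

lemma Fstep_adj_mem {a b : Exp n} (h : (Fstep g V C).Adj a b) : a ∈ V ∧ b ∈ V := by
  rcases (SimpleGraph.fromRel_adj _ a b).mp h |>.2 with h | h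
  exacts [⟨h.1, h.2.1⟩, ⟨h.2.1, h.1⟩]

lemma Fstep_eq_bot_of_supp_eq_empty (hg : g.supp = ∅) : Fstep g V C = ⊥ := by
  ext a b
  simp [Fstep, hg]

lemma le_Fstep {G : SimpleGraph (Exp n)} (hG : ∀ a b, G.Adj a b → a ∈ V ∧ b ∈ V)
    (hg : g.supp.Nonempty) (hC : gSupp g V G ⊆ C) : G ≤ Fstep g V C := by
  obtain ⟨p, hp⟩ := hg
  intro a b hab
  exact (SimpleGraph.fromRel_adj _ a b).mpr
    ⟨hab.ne, Or.inl ⟨(hG a b hab).1, (hG a b hab).2, p, hp, hC ⟨a, b, p, Or.inr hab, hp, rfl⟩⟩⟩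

end Graphs

section TermSparsity

variable {n m : ℕ} (f : CPoly n) (g : Fin m → CPoly n)
  (CE : Set (Exp n) → SimpleGraph (Exp n) → SimpleGraph (Exp n)) (d : ℕ)

lemma tsFam_adj_mem
    (hCE_supp : ∀ (V : Set (Exp n)) (G : SimpleGraph (Exp n)),
      (∀ a b, G.Adj a b → a ∈ V ∧ b ∈ V) → ∀ a b, (CE V G).Adj a b → a ∈ V ∧ b ∈ V)
    (k : ℕ) (j : Fin (m + 1)) :
    ∀ a b, (tsFam f g CE d k j).Adj a b →
      a ∈ degSet n (d - dje g j) ∧ b ∈ degSet n (d - dje g j) := by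
  cases k with
  | zero =>
    intro a b h
    by_cases hj : j = 0
    · subst hj
      exact tspGraph_adj_mem (by simpa [tsFam, dje] using h)
    · simp [tsFam, hj] at h
  | succ k => exact hCE_supp _ _ fun _ _ => Fstep_adj_mem

lemma tsFam_le_succ (hCE_le : ∀ (V : Set (Exp n)) (G : SimpleGraph (Exp n)), G ≤ CE V G)
    (hCE_supp : ∀ (V : Set (Exp n)) (G : SimpleGraph (Exp n)),
      (∀ a b, G.Adj a b → a ∈ V ∧ b ∈ V) → ∀ a b, (CE V G).Adj a b → a ∈ V ∧ b ∈ V)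
    (k : ℕ) (j : Fin (m + 1)) :
    tsFam f g CE d k j ≤ tsFam f g CE d (k + 1) j := by
  rcases (gext g j).supp.eq_empty_or_nonempty with hg | hg
  · -- With `supp g_j = ∅` every `F^(k+1)_{d,j}` is empty, so the graphs are constant from `k = 1`.
    cases k with
    | zero =>
      have hj : j ≠ 0 := by
        rintro rfl
        exact hg.subset (CPoly.zero_mem_supp_one n)
      simp [tsFam, hj]
    | succ k => simp only [tsFam, Fstep_eq_bot_of_supp_eq_empty hg, le_refl]
  · exact (le_Fstep (tsFam_adj_mem f g CE d hCE_supp k j) hg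
      (Set.subset_iUnion_of_subset j subset_rfl)).trans (hCE_le _ _)

lemma tsFeas_succ_subset (hCE_le : ∀ (V : Set (Exp n)) (G : SimpleGraph (Exp n)), G ≤ CE V G)
    (hCE_supp : ∀ (V : Set (Exp n)) (G : SimpleGraph (Exp n)),
      (∀ a b, G.Adj a b → a ∈ V ∧ b ∈ V) → ∀ a b, (CE V G).Adj a b → a ∈ V ∧ b ∈ V)
    (k : ℕ) : tsFeas f g CE d (k + 1) ⊆ tsFeas f g CE d k :=
  fun _ ⟨hherm, hy0, hpsd⟩ => ⟨hherm, hy0, fun j =>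
    inProjPSD_hadamard_adjB_mono (tsFam_le_succ f g CE d hCE_le hCE_supp k j) (hpsd j)⟩

lemma locMat_gext_posSemidef {y : Exp n × Exp n → ℂ} (hy : y ∈ denseFeas f g d)
    (j : Fin (m + 1)) : (locMat (gext g j) (d - dje g j) Set.univ y).PosSemidef := by
  induction j using Fin.cases with
  | zero => simpa [gext, dje, locMat_one] using hy.2.2.1
  | succ i => exact hy.2.2.2 i

lemma denseFeas_subset_tsFeas (k : ℕ) : denseFeas f g d ⊆ tsFeas f g CE d k :=
  fun _ hy => ⟨hy.1, hy.2.1, fun j =>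
    inProjPSD_hadamard_adjB_of_posSemidef _ (locMat_gext_posSemidef f g d hy j)⟩

end TermSparsity

theorem ts_mono_sparse_order_general {n m : ℕ} (f : CPoly n) (g : Fin m → CPoly n)
    (CE : Set (Exp n) → SimpleGraph (Exp n) → SimpleGraph (Exp n))
    (hCE_le : ∀ (V : Set (Exp n)) (G : SimpleGraph (Exp n)), G ≤ CE V G)
    (hCE_supp : ∀ (V : Set (Exp n)) (G : SimpleGraph (Exp n)),
      (∀ a b, G.Adj a b → a ∈ V ∧ b ∈ V) → ∀ a b, (CE V G).Adj a b → a ∈ V ∧ b ∈ V)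
    (d : ℕ) :
    (∀ k : ℕ, 1 ≤ k → tsOpt f g CE d k ≤ tsOpt f g CE d (k + 1)) ∧
    (∀ k : ℕ, 1 ≤ k → tsOpt f g CE d k ≤ denseOpt f g d) :=
  ⟨fun k _ => sInf_le_sInf (Set.image_mono (tsFeas_succ_subset f g CE d hCE_le hCE_supp k)),
    fun k _ => sInf_le_sInf (Set.image_mono (denseFeas_subset_tsFeas f g CE d k))⟩

/-- **Theorem (TSSOS hierarchy, monotonicity in the sparse order).**
Fix a relaxation order `d ≥ d_min`. The sequence `(ρ^ts_(d,k))_(k ≥ 1)` is monotone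
nondecreasing in `k`, and `ρ^ts_(d,k) ≤ ρ_d` for all `k ≥ 1`. -/
theorem ts_mono_sparse_order {n m : ℕ} (f : CPoly n) (g : Fin m → CPoly n)
    (CE : Set (Exp n) → SimpleGraph (Exp n) → SimpleGraph (Exp n))
    (hCE_le : ∀ (V : Set (Exp n)) (G : SimpleGraph (Exp n)), G ≤ CE V G)
    (hCE_chordal : ∀ (V : Set (Exp n)) (G : SimpleGraph (Exp n)), IsChordal (CE V G))
    (hCE_supp : ∀ (V : Set (Exp n)) (G : SimpleGraph (Exp n)),
      (∀ a b, G.Adj a b → a ∈ V ∧ b ∈ V) → ∀ a b, (CE V G).Adj a b → a ∈ V ∧ b ∈ V)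
    (d : ℕ) (hd : dminOrd f g ≤ d) :
    (∀ k : ℕ, 1 ≤ k → tsOpt f g CE d k ≤ tsOpt f g CE d (k + 1)) ∧
    (∀ k : ℕ, 1 ≤ k → tsOpt f g CE d k ≤ denseOpt f g d) :=
  ts_mono_sparse_order_general f g CE hCE_le hCE_supp d

end
end

section
/- Fix a sparse order k ≥ 1 for the CPOP. The sequence (ρ^ts_{d,k})_{d≥d_min} of optima of the term-sparsity-adapted complex moment relaxations is monotone nondecreasing in the relaxation order d. -/
open scoped BigOperators ComplexOrder

attribute [local instance] Classical.propDecidable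

noncomputable section

/-!
Raising the relaxation order `d` enlarges every index set `ℕ^n_{d-d_j}` and, by induction on the
sparse order using the monotonicity of the chordal extension, every graph `G^(k)_{d,j}`. A PSD
completion of the order-`(d+1)` constraint then restricts to one of the order-`d` constraint (a
principal submatrix), so the feasible sets shrink as `d` grows and the infima increase.
-/

lemma SimpleGraph.fromRel_monotone {V : Type*} : Monotone (SimpleGraph.fromRel (V := V)) :=
  fun _ _ hrs a b hab => by
    rw [SimpleGraph.fromRel_adj] at hab ⊢
    exact ⟨hab.1, hab.2.imp (hrs a b) (hrs b a)⟩

lemma degSet_mono {n : ℕ} : Monotone (degSet n) :=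
  fun _ _ hd _ hβ => le_trans hβ hd

lemma tspGraph_mono {n : ℕ} (A : Set (Exp n × Exp n)) {V V' : Set (Exp n)} (hV : V ⊆ V') :
    tspGraph A V ≤ tspGraph A V' :=
  SimpleGraph.fromRel_monotone fun _ _ ⟨hβ, hγ, hA⟩ => ⟨hV hβ, hV hγ, hA⟩

lemma gSupp_mono {n : ℕ} (g : CPoly n) {V V' : Set (Exp n)} {G G' : SimpleGraph (Exp n)}
    (hV : V ⊆ V') (hG : G ≤ G') : gSupp g V G ⊆ gSupp g V' G' := by
  rintro q ⟨β, γ, p, hβγ, hp, rfl⟩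
  exact ⟨β, γ, p, hβγ.imp (And.imp_right (@hV β)) (@hG β γ), hp, rfl⟩

lemma Fstep_mono {n : ℕ} (g : CPoly n) {V V' : Set (Exp n)} {C C' : Set (Exp n × Exp n)}
    (hV : V ⊆ V') (hC : C ⊆ C') : Fstep g V C ≤ Fstep g V' C' :=
  SimpleGraph.fromRel_monotone fun _ _ ⟨hβ, hγ, p, hp, hpC⟩ => ⟨hV hβ, hV hγ, p, hp, hC hpC⟩

lemma tsC_mono {n m : ℕ} (g : Fin m → CPoly n) {d d' : ℕ} (hd : d ≤ d')
    {GG GG' : Fin (m + 1) → SimpleGraph (Exp n)} (hGG : GG ≤ GG') :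
    tsC g d GG ⊆ tsC g d' GG' :=
  Set.iUnion_mono fun i => gSupp_mono _ (degSet_mono (Nat.sub_le_sub_right hd _)) (hGG i)

lemma tsFam_mono_order {n m : ℕ} (f : CPoly n) (g : Fin m → CPoly n)
    {CE : Set (Exp n) → SimpleGraph (Exp n) → SimpleGraph (Exp n)}
    (hCE_mono : ∀ (V₁ V₂ : Set (Exp n)) (G₁ G₂ : SimpleGraph (Exp n)),
      V₁ ⊆ V₂ → G₁ ≤ G₂ → CE V₁ G₁ ≤ CE V₂ G₂)
    {d d' : ℕ} (hd : d ≤ d') (k : ℕ) :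
    tsFam f g CE d k ≤ tsFam f g CE d' k := by
  induction k with
  | zero =>
    intro j
    by_cases hj : j = 0
    · simpa only [tsFam, hj, if_true] using tspGraph_mono _ (degSet_mono hd)
    · simp only [tsFam, if_neg hj, le_refl]
  | succ k ih =>
    intro j
    have hV := degSet_mono (n := n) (Nat.sub_le_sub_right hd (dje g j))
    exact hCE_mono _ _ _ _ hV (Fstep_mono _ hV (tsC_mono g hd ih))

def MIdx.inclusion {n d d' : ℕ} {S : Set (Fin n)} (hd : d ≤ d') : MIdx n d S → MIdx n d' S :=
  fun β => ⟨β.1, β.2.1.trans hd, β.2.2⟩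

lemma inProjPSD_hadamard_adjB_iff {n d : ℕ} {S : Set (Fin n)} {G : SimpleGraph (Exp n)}
    {M : Matrix (MIdx n d S) (MIdx n d S) ℂ} :
    inProjPSD d S G (Matrix.hadamard (adjB d S G) M) ↔
      ∃ Q : Matrix (MIdx n d S) (MIdx n d S) ℂ, Q.PosSemidef ∧
        ∀ β γ, (β = γ ∨ G.Adj β.1 γ.1) → Q β γ = M β γ := by
  constructor
  · rintro ⟨Q, hQ, hQM⟩
    refine ⟨Q, hQ, fun β γ hβγ => ?_⟩
    simpa [adjB, hβγ] using congrFun₂ hQM β γ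
  · rintro ⟨Q, hQ, hQM⟩
    refine ⟨Q, hQ, funext₂ fun β γ => ?_⟩
    by_cases hβγ : β = γ ∨ G.Adj β.1 γ.1 <;> simp [adjB, hβγ, hQM]

lemma inProjPSD_hadamard_adjB_of_le {n d d' : ℕ} {S : Set (Fin n)} (hd : d ≤ d')
    {G G' : SimpleGraph (Exp n)} (hG : G ≤ G') {M : Matrix (MIdx n d S) (MIdx n d S) ℂ}
    {M' : Matrix (MIdx n d' S) (MIdx n d' S) ℂ}
    (hM : M'.submatrix (MIdx.inclusion hd) (MIdx.inclusion hd) = M)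
    (h : inProjPSD d' S G' (Matrix.hadamard (adjB d' S G') M')) :
    inProjPSD d S G (Matrix.hadamard (adjB d S G) M) := by
  rw [inProjPSD_hadamard_adjB_iff] at h ⊢
  obtain ⟨Q, hQ, hQM⟩ := h
  set e := MIdx.inclusion (S := S) hd
  refine ⟨Q.submatrix e e, hQ.submatrix e, fun β γ hβγ => ?_⟩
  rw [← hM]
  exact hQM (e β) (e γ) (hβγ.imp (congrArg e) (@hG _ _))

lemma tsFeas_antitone_order {n m : ℕ} (f : CPoly n) (g : Fin m → CPoly n)
    {CE : Set (Exp n) → SimpleGraph (Exp n) → SimpleGraph (Exp n)}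
    (hCE_mono : ∀ (V₁ V₂ : Set (Exp n)) (G₁ G₂ : SimpleGraph (Exp n)),
      V₁ ⊆ V₂ → G₁ ≤ G₂ → CE V₁ G₁ ≤ CE V₂ G₂)
    {d d' : ℕ} (hd : d ≤ d') (k : ℕ) : tsFeas f g CE d' k ⊆ tsFeas f g CE d k := by
  rintro y ⟨hherm, h00, hloc⟩
  exact ⟨hherm, h00, fun j => inProjPSD_hadamard_adjB_of_le (Nat.sub_le_sub_right hd _)
    (tsFam_mono_order f g hCE_mono hd k j) rfl (hloc j)⟩

theorem ts_mono_relaxation_order_general {n m : ℕ} (f : CPoly n) (g : Fin m → CPoly n)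
    (CE : Set (Exp n) → SimpleGraph (Exp n) → SimpleGraph (Exp n))
    (hCE_mono : ∀ (V₁ V₂ : Set (Exp n)) (G₁ G₂ : SimpleGraph (Exp n)),
      V₁ ⊆ V₂ → G₁ ≤ G₂ → CE V₁ G₁ ≤ CE V₂ G₂)
    (k : ℕ) :
    ∀ d : ℕ, dminOrd f g ≤ d → tsOpt f g CE d k ≤ tsOpt f g CE (d + 1) k :=
  fun d _ => sInf_le_sInf (Set.image_mono (tsFeas_antitone_order f g hCE_mono d.le_succ k))

/-- **Theorem (TSSOS hierarchy, monotonicity in the relaxation order).**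
Fix a sparse order `k ≥ 1`. The sequence `(ρ^ts_(d,k))_(d ≥ d_min)` is monotone
nondecreasing in `d`. -/
theorem ts_mono_relaxation_order {n m : ℕ} (f : CPoly n) (g : Fin m → CPoly n)
    (CE : Set (Exp n) → SimpleGraph (Exp n) → SimpleGraph (Exp n))
    (hCE_le : ∀ (V : Set (Exp n)) (G : SimpleGraph (Exp n)), G ≤ CE V G)
    (hCE_chordal : ∀ (V : Set (Exp n)) (G : SimpleGraph (Exp n)), IsChordal (CE V G))
    (hCE_supp : ∀ (V : Set (Exp n)) (G : SimpleGraph (Exp n)),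
      (∀ a b, G.Adj a b → a ∈ V ∧ b ∈ V) → ∀ a b, (CE V G).Adj a b → a ∈ V ∧ b ∈ V)
    (hCE_mono : ∀ (V₁ V₂ : Set (Exp n)) (G₁ G₂ : SimpleGraph (Exp n)),
      V₁ ⊆ V₂ → G₁ ≤ G₂ → CE V₁ G₁ ≤ CE V₂ G₂)
    (k : ℕ) (hk : 1 ≤ k) :
    ∀ d : ℕ, dminOrd f g ≤ d → tsOpt f g CE d k ≤ tsOpt f g CE (d + 1) k :=
  ts_mono_relaxation_order_general f g CE hCE_mono k

end
end

section
/- Let R be the set of sign symmetries of 𝒜 = supp(f) ∪ ⋃_{j=1}^m supp(g_j), viewed as a matrix whose columns are binary vectors in Z_2^n. Assume d ≥ d_min and k ≥ 1, and suppose the chordal extensions used in the term-sparsity iteration only add edges between nodes in the same connected component. Then for every j ∈ {0,1,…,m} and all β, γ ∈ ℕ^n_{d−d_j}, if {β,γ} is an edge of G^(k)_{d,j}, then Rᵀ(β+γ) ≡ 0 (mod 2). -/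
open scoped BigOperators ComplexOrder

attribute [local instance] Classical.propDecidable

noncomputable section

/-- Auxiliary: `φ_r(β) = Σ_i r_i β_i` in `ZMod 2`. -/
def phiSym {n : ℕ} (r : Fin n → ZMod 2) (β : Exp n) : ZMod 2 :=
  ∑ i, r i * ((β i : ℕ) : ZMod 2)

lemma phiSym_pair {n : ℕ} (r : Fin n → ZMod 2) (β γ : Exp n) :
    ∑ i, r i * ((β i + γ i : ℕ) : ZMod 2) = phiSym r β + phiSym r γ := by
  rw [phiSym, phiSym, ← Finset.sum_add_distrib]
  refine Finset.sum_congr rfl fun i _ => ?_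
  push_cast; ring

lemma zmod2_add_eq_zero (a b : ZMod 2) : a + b = 0 ↔ a = b := by revert a b; decide

lemma phiSym_add {n : ℕ} (r : Fin n → ZMod 2) (β p : Exp n) :
    phiSym r (β + p) = phiSym r β + phiSym r p := by
  rw [phiSym, phiSym, phiSym, ← Finset.sum_add_distrib]
  refine Finset.sum_congr rfl fun i _ => ?_
  show r i * ((β i + p i : ℕ) : ZMod 2) = _
  push_cast; ring

lemma reachable_phi {n : ℕ} {G : SimpleGraph (Exp n)} {r : Fin n → ZMod 2}
    (h : ∀ a b, G.Adj a b → phiSym r a = phiSym r b) {β γ : Exp n}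
    (hr : G.Reachable β γ) : phiSym r β = phiSym r γ := by
  obtain ⟨w⟩ := hr
  induction w with
  | nil => rfl
  | cons hadj _ ih => exact (h _ _ hadj).trans ih

lemma ts_phi_main {n m : ℕ} (f : CPoly n) (g : Fin m → CPoly n)
    (CE : Set (Exp n) → SimpleGraph (Exp n) → SimpleGraph (Exp n))
    (hCE_comp : ∀ (V : Set (Exp n)) (G : SimpleGraph (Exp n)) (a b : Exp n),
      (CE V G).Adj a b → G.Reachable a b)
    (d : ℕ) (r : Fin n → ZMod 2) (hr : r ∈ signSyms (suppA f g)) :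
    ∀ (k : ℕ) (j : Fin (m + 1)) (β γ : Exp n),
      (tsFam f g CE d k j).Adj β γ → phiSym r β = phiSym r γ := by
  have hA : ∀ p ∈ suppA f g, phiSym r p.1 = phiSym r p.2 := fun p hp =>
    (zmod2_add_eq_zero _ _).mp (by rw [← phiSym_pair]; exact hr p hp)
  have hsupp : ∀ (i : Fin (m + 1)) (p : Exp n × Exp n), p ∈ (gext g i).supp →
      phiSym r p.1 = phiSym r p.2 := by
    intro i p hp
    induction i using Fin.cases with
    | zero =>
      have : p = (0, 0) := by
        by_contra hne
        have : (gext g 0).coeff p = 0 := by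
          simp only [gext, Fin.cases_zero, CPoly.one]
          exact if_neg hne
        exact hp this
      subst this; rfl
    | succ i =>
      apply hA
      right
      exact Set.mem_iUnion.mpr ⟨i, by simpa [gext] using hp⟩
  intro k
  induction k with
  | zero =>
    intro j β γ hadj
    by_cases hj : j = 0
    · subst hj
      have hadj : (tspGraph (suppA f g) (degSet n d)).Adj β γ := by
        simpa [tsFam] using hadj
      rw [tspGraph, SimpleGraph.fromRel_adj] at hadj
      obtain ⟨-, h | h⟩ := hadj
      · exact hA _ h.2.2
      · exact (hA _ h.2.2).symm
    · simp only [tsFam, if_neg hj] at hadj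
      exact absurd hadj (by simp)
  | succ k ih =>
    intro j β γ hadj
    have htsC : ∀ q ∈ tsC g d (tsFam f g CE d k), phiSym r q.1 = phiSym r q.2 := by
      intro q hq
      obtain ⟨i, hq⟩ := Set.mem_iUnion.mp hq
      obtain ⟨β', γ', p', hcond, hp', hqe⟩ := hq
      have h1 : phiSym r β' = phiSym r γ' := by
        rcases hcond with ⟨rfl, -⟩ | hadj'
        · rfl
        · exact ih i β' γ' hadj'
      have h2 := hsupp i p' hp'
      rw [hqe]
      simp only [phiSym_add]
      rw [h1, h2]
    have hedge : ∀ a b, (Fstep (gext g j) (degSet n (d - dje g j))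
        (tsC g d (tsFam f g CE d k))).Adj a b → phiSym r a = phiSym r b := by
      intro a b hab
      rw [Fstep, SimpleGraph.fromRel_adj] at hab
      obtain ⟨-, h | h⟩ := hab
      · obtain ⟨-, -, p, hp, hmem⟩ := h
        have h1 := htsC _ hmem
        simp only [phiSym_add] at h1
        have h2 := hsupp j p hp
        rw [h2] at h1
        exact add_right_cancel h1
      · obtain ⟨-, -, p, hp, hmem⟩ := h
        have h1 := htsC _ hmem
        simp only [phiSym_add] at h1
        have h2 := hsupp j p hp
        rw [h2] at h1
        exact (add_right_cancel h1).symm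
    exact reachable_phi hedge (hCE_comp _ _ _ _ hadj)

/-- **Theorem (sign symmetries govern the TSSOS block structure).**
Let `R` be the sign symmetries of `𝒜 = supp f ∪ ⋃_j supp g_j`. Assume `d ≥ d_min`, `k ≥ 1`,
and that the chordal extensions only add edges between nodes in the same connected
component. Then every edge `{β,γ}` of `G^(k)_(d,j)` satisfies `Rᵀ(β+γ) ≡ 0 (mod 2)`. -/
theorem ts_sign_symmetry {n m : ℕ} (f : CPoly n) (g : Fin m → CPoly n)
    (CE : Set (Exp n) → SimpleGraph (Exp n) → SimpleGraph (Exp n))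
    (hCE_le : ∀ (V : Set (Exp n)) (G : SimpleGraph (Exp n)), G ≤ CE V G)
    (hCE_chordal : ∀ (V : Set (Exp n)) (G : SimpleGraph (Exp n)), IsChordal (CE V G))
    (hCE_supp : ∀ (V : Set (Exp n)) (G : SimpleGraph (Exp n)),
      (∀ a b, G.Adj a b → a ∈ V ∧ b ∈ V) → ∀ a b, (CE V G).Adj a b → a ∈ V ∧ b ∈ V)
    (hCE_comp : ∀ (V : Set (Exp n)) (G : SimpleGraph (Exp n)) (a b : Exp n),
      (CE V G).Adj a b → G.Reachable a b)
    (d : ℕ) (hd : dminOrd f g ≤ d) (k : ℕ) (hk : 1 ≤ k) :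
    ∀ j : Fin (m + 1), ∀ β γ : Exp n,
      β ∈ degSet n (d - dje g j) → γ ∈ degSet n (d - dje g j) →
      (tsFam f g CE d k j).Adj β γ →
      ∀ r ∈ signSyms (suppA f g), ∑ i, r i * ((β i + γ i : ℕ) : ZMod 2) = 0 := by
  intro j β γ _ _ hadj r hr
  rw [phiSym_pair, zmod2_add_eq_zero]
  exact ts_phi_main f g CE hCE_comp d r hr k j β γ hadj

end
end

section
/- Let R be the set of sign symmetries of 𝒜 = supp(f) ∪ ⋃_{j=1}^m supp(g_j), viewed as a matrix whose columns are binary vectors in Z_2^n. Assume d ≥ d_min and k ≥ 1, and suppose the chordal extensions used in the correlative-term-sparsity iteration only add edges between nodes in the same connected component. Then for every l ∈ [p], every j ∈ {0} ∪ J_l, and all β, γ ∈ ℕ^{n_l}_{d−d_j}, if {β,γ} is an edge of G^(k)_{d,l,j}, then Rᵀ(β+γ) ≡ 0 (mod 2). -/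
open scoped BigOperators ComplexOrder

attribute [local instance] Classical.propDecidable

noncomputable section

/- ### Auxiliary lemmas for the sign symmetry theorem -/

/-- `Sr r β = Σ_i r_i β_i` in `Z_2`. -/
def SrAux {n : ℕ} (r : Fin n → ZMod 2) (β : Exp n) : ZMod 2 :=
  ∑ i, r i * ((β i : ℕ) : ZMod 2)

lemma SrAux_add {n : ℕ} (r : Fin n → ZMod 2) (β γ : Exp n) :
    SrAux r (β + γ) = SrAux r β + SrAux r γ := by
  simp [SrAux, Pi.add_apply, Nat.cast_add, mul_add, Finset.sum_add_distrib]

lemma SrAux_pair {n : ℕ} (r : Fin n → ZMod 2) (β γ : Exp n) :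
    (∑ i, r i * ((β i + γ i : ℕ) : ZMod 2)) = SrAux r β + SrAux r γ := by
  simp [SrAux, Nat.cast_add, mul_add, Finset.sum_add_distrib]

lemma add_eq_zero_zmod2 {a b : ZMod 2} (h : a + b = 0) : a = b := by
  have hb : b + b = 0 := by
    have := ZMod.natCast_self 2
    fin_cases b <;> simp_all <;> rfl
  calc a = a + (b + b) := by rw [hb, add_zero]
    _ = (a + b) + b := by ring
    _ = b := by rw [h, zero_add]

lemma signSyms_eq {n : ℕ} {A : Set (Exp n × Exp n)} {r : Fin n → ZMod 2}
    (hr : r ∈ signSyms A) {p : Exp n × Exp n} (hp : p ∈ A) :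
    SrAux r p.1 = SrAux r p.2 := by
  have h := hr p hp
  rw [SrAux_pair] at h
  exact add_eq_zero_zmod2 h

lemma gext_supp_sr {n m : ℕ} {f : CPoly n} {g : Fin m → CPoly n} {r : Fin n → ZMod 2}
    (hr : r ∈ signSyms (suppA f g)) (j : Fin (m + 1)) {p : Exp n × Exp n}
    (hp : p ∈ (gext g j).supp) : SrAux r p.1 = SrAux r p.2 := by
  induction j using Fin.cases with
  | zero =>
      have hp0 : p = (0, 0) := by
        by_contra h
        apply hp
        show (CPoly.one n).coeff p = 0
        simp only [CPoly.one]
        rw [if_neg h]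
      rw [hp0]
  | succ j' =>
      exact signSyms_eq hr (Or.inr (Set.mem_iUnion.mpr ⟨j', hp⟩))

lemma csts_key {n m p : ℕ} (f : CPoly n) (g : Fin m → CPoly n)
    (CE : Set (Exp n) → SimpleGraph (Exp n) → SimpleGraph (Exp n))
    (I : Fin p → Set (Fin n)) (J : Fin p → Finset (Fin m)) (d : ℕ)
    (hCE_comp : ∀ (V : Set (Exp n)) (G : SimpleGraph (Exp n)) (a b : Exp n),
      (CE V G).Adj a b → G.Reachable a b) :
    ∀ k : ℕ, ∀ l : Fin p, ∀ j : Fin (m + 1), ∀ β γ : Exp n,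
      (cstsFam f g CE I J d k l j).Adj β γ →
      ∀ r ∈ signSyms (suppA f g), SrAux r β = SrAux r γ := by
  intro k
  induction k with
  | zero =>
      intro l j β γ hadj r hr
      by_cases hj : j = 0
      · subst hj
        simp only [cstsFam, if_pos rfl, tspGraph, SimpleGraph.fromRel_adj] at hadj
        obtain ⟨hne, h | h⟩ := hadj
        · exact signSyms_eq hr h.2.2.1
        · exact (signSyms_eq hr h.2.2.1).symm
      · simp [cstsFam, hj] at hadj
  | succ k ih =>
      intro l j β γ hadj r hr
      simp only [cstsFam] at hadj
      have hreach := hCE_comp _ _ _ _ hadj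
      clear hadj
      have edge : ∀ a b : Exp n,
          (Fstep (gext g j) (degSetI (d - dje g j) (I l))
            (cstsC g d I J (cstsFam f g CE I J d k))).Adj a b →
          SrAux r a = SrAux r b := by
        have relcase : ∀ a b : Exp n,
            (a ∈ degSetI (d - dje g j) (I l) ∧ b ∈ degSetI (d - dje g j) (I l) ∧
              ∃ q ∈ (gext g j).supp,
                (a + q.1, b + q.2) ∈ cstsC g d I J (cstsFam f g CE I J d k)) →
            SrAux r a = SrAux r b := by
          rintro a b ⟨-, -, q, hq, hmem⟩
          rw [cstsC, Set.mem_iUnion] at hmem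
          obtain ⟨l', hmem⟩ := hmem
          rw [Set.mem_iUnion₂] at hmem
          obtain ⟨j', hj', hmem⟩ := hmem
          obtain ⟨β', γ', q', hcond, hq', heq⟩ := hmem
          have h1 : a + q.1 = β' + q'.1 := congrArg Prod.fst heq
          have h2 : b + q.2 = γ' + q'.2 := congrArg Prod.snd heq
          have e1 : SrAux r a + SrAux r q.1 = SrAux r β' + SrAux r q'.1 := by
            rw [← SrAux_add, ← SrAux_add, h1]
          have e2 : SrAux r b + SrAux r q.2 = SrAux r γ' + SrAux r q'.2 := by
            rw [← SrAux_add, ← SrAux_add, h2]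
          have eq_q : SrAux r q.1 = SrAux r q.2 := gext_supp_sr hr j hq
          have eq_q' : SrAux r q'.1 = SrAux r q'.2 := gext_supp_sr hr j' hq'
          have eβγ : SrAux r β' = SrAux r γ' := by
            rcases hcond with ⟨h, -⟩ | hadj'
            · rw [h]
            · exact ih l' j' β' γ' hadj' r hr
          linear_combination e1 - e2 - eq_q + eq_q' + eβγ
        intro a b hab
        rw [Fstep, SimpleGraph.fromRel_adj] at hab
        rcases hab.2 with h | h
        · exact relcase a b h
        · exact (relcase b a h).symm
      obtain ⟨w⟩ := hreach
      induction w with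
      | nil => rfl
      | cons h w ihw => exact (edge _ _ h).trans ihw

/-- **Theorem (sign symmetries govern the CS-TSSOS block structure).**
Let `R` be the sign symmetries of `𝒜 = supp f ∪ ⋃_j supp g_j`. Assume `d ≥ d_min`, `k ≥ 1`,
and that the chordal extensions only add edges between nodes in the same connected
component. Then for every `l ∈ [p]`, `j ∈ {0} ∪ J_l`, every edge `{β,γ}` of
`G^(k)_(d,l,j)` satisfies `Rᵀ(β+γ) ≡ 0 (mod 2)`. -/
theorem csts_sign_symmetry {n m : ℕ} (f : CPoly n) (g : Fin m → CPoly n)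
    (d : ℕ) (hd : dminOrd f g ≤ d)
    (Gbar : SimpleGraph (Fin n)) (hGbar_chordal : IsChordal Gbar)
    (hGbar_ext : cspGraph f g d ≤ Gbar)
    {p : ℕ} (I : Fin p → Set (Fin n))
    (hI : ∀ l : Fin p, IsMaxClique Gbar (I l))
    (hIall : ∀ s : Set (Fin n), IsMaxClique Gbar s → ∃ l : Fin p, I l = s)
    (J : Fin p → Finset (Fin m)) (J' : Finset (Fin m))
    (hJ' : ∀ j : Fin m, j ∈ J' ↔ (g j).halfDeg = d)
    (hJdisj : ∀ l l' : Fin p, l ≠ l' → Disjoint (J l) (J l'))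
    (hJJ' : ∀ l : Fin p, ∀ j ∈ J l, j ∉ J')
    (hJcover : ∀ j : Fin m, j ∉ J' → ∃ l : Fin p, j ∈ J l)
    (hJvars : ∀ l : Fin p, ∀ j ∈ J l, varsOf (g j) ⊆ I l)
    (CE : Set (Exp n) → SimpleGraph (Exp n) → SimpleGraph (Exp n))
    (hCE_le : ∀ (V : Set (Exp n)) (G : SimpleGraph (Exp n)), G ≤ CE V G)
    (hCE_chordal : ∀ (V : Set (Exp n)) (G : SimpleGraph (Exp n)), IsChordal (CE V G))
    (hCE_supp : ∀ (V : Set (Exp n)) (G : SimpleGraph (Exp n)),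
      (∀ a b, G.Adj a b → a ∈ V ∧ b ∈ V) → ∀ a b, (CE V G).Adj a b → a ∈ V ∧ b ∈ V)
    (hCE_comp : ∀ (V : Set (Exp n)) (G : SimpleGraph (Exp n)) (a b : Exp n),
      (CE V G).Adj a b → G.Reachable a b)
    (k : ℕ) (hk : 1 ≤ k) :
    ∀ l : Fin p, ∀ j ∈ Jext (J l), ∀ β γ : Exp n,
      β ∈ degSetI (d - dje g j) (I l) → γ ∈ degSetI (d - dje g j) (I l) →
      (cstsFam f g CE I J d k l j).Adj β γ →
      ∀ r ∈ signSyms (suppA f g), ∑ i, r i * ((β i + γ i : ℕ) : ZMod 2) = 0 := by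
  intro l j _ β γ _ _ hadj r hr
  rw [SrAux_pair, csts_key f g CE I J d hCE_comp k l j β γ hadj r hr]
  have h2 : ((2 : ℕ) : ZMod 2) = 0 := ZMod.natCast_self 2
  linear_combination (SrAux r γ) * h2

end
end
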